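/- Assume the rewards satisfy r_DC > r_CC > r_DD > r_CD, 0 < α < 1 and 0 < γ < 1. Suppose the initial Q-table Q⁰ satisfies Q⁰(s,D) > Q⁰(s,C) for every state s (always-defect greedy policy), together with: (i) r_DD/(1−γ) < Q⁰((D,D),C); (ii) Q⁰((D,D),C) < (γ·r_CC + r_DD)/(1−γ²) < Q⁰((C,C),C) and Q⁰((D,D),D) < Q⁰((C,C),C); (iii) Q⁰((C,C),C) < r_CC/(1−γ). Then for the deterministic self-play greedy Q-learning trajectory started at s₀ = (D,D), there exists a time t₂ such that for all t ≥ t₂ the greedy policy of Qᵗ is Pavlov: Qᵗ((C,C),C) > Qᵗ((C,C),D), Qᵗ((D,D),C) > Qᵗ((D,D),D), Qᵗ((C,D),D) > Qᵗ((C,D),C), and Qᵗ((D,C),D) > Qᵗ((D,C),C). -/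

import Mathlib

inductive Act | C | D
deriving DecidableEq

open Act

abbrev State := Act × Act

/-- The greedy action of a Q-table in a state, ties broken toward D. -/
noncomputable def greedy (Q : State → Act → ℝ) (s : State) : Act :=
  if Q s C > Q s D then C else D

/-!
Only the four entries of the diagonal states `(D,D)` and `(C,C)` ever change. While the agents
defect in `(D,D)`, `Q((D,D),D)` contracts geometrically (rate `ρ = 1 - α(1-γ)`) towards
`r_DD/(1-γ)`, which lies below `Q((D,D),C)`, so they eventually cooperate. From then on they
alternate `(D,D) → (C,C) → (D,D)` as long as `Q((C,C),D) ≥ Q((C,C),C)`; each round trip is a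
`ρ`-contraction of `(Q((D,D),C), Q((C,C),D))` towards the fixed point `(x*, y*)` of
`x* = r_CC + γ y*`, `y* = r_DD + γ x*`. Since `y* < Q((C,C),C)`, the cycle ends with the
agents in `(C,C)` preferring `C`, and there `Q((C,C),C)` only increases towards `r_CC/(1-γ)`.
-/

theorem greedy_of_lt {Q : State → Act → ℝ} {p : State} (h : Q p D < Q p C) :
    greedy Q p = C :=
  if_pos h

theorem greedy_of_le {Q : State → Act → ℝ} {p : State} (h : Q p C ≤ Q p D) :
    greedy Q p = D :=
  if_neg h.not_gt

def tdUpdate (α γ q rew v : ℝ) : ℝ := q + α * (rew + γ * v - q)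

section tdUpdate

variable {α γ : ℝ}

theorem tdUpdate_self_sub {q rew V : ℝ} (hV : (1 - γ) * V = rew) :
    tdUpdate α γ q rew q - V = (1 - α * (1 - γ)) * (q - V) := by
  unfold tdUpdate
  linear_combination (-α) * hV

theorem lt_tdUpdate {d q rew v : ℝ} (hα0 : 0 ≤ α) (hα1 : α < 1) (hq : d < q)
    (hv : d ≤ rew + γ * v) : d < tdUpdate α γ q rew v := by
  unfold tdUpdate
  nlinarith

theorem abs_tdUpdate_sub_le {q q' v v' rew m : ℝ} (hα0 : 0 ≤ α) (hα1 : α ≤ 1) (hγ0 : 0 ≤ γ)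
    (hq' : q' = rew + γ * v') (hq : |q - q'| ≤ m) (hv : |v - v'| ≤ m) :
    |tdUpdate α γ q rew v - q'| ≤ (1 - α * (1 - γ)) * m := by
  have hsplit : tdUpdate α γ q rew v - q' = (1 - α) * (q - q') + (α * γ) * (v - v') := by
    unfold tdUpdate
    linear_combination (-α) * hq'
  have hαγ : 0 ≤ α * γ := mul_nonneg hα0 hγ0
  calc |tdUpdate α γ q rew v - q'|
      ≤ |(1 - α) * (q - q')| + |(α * γ) * (v - v')| := hsplit ▸ abs_add_le _ _
    _ = (1 - α) * |q - q'| + (α * γ) * |v - v'| := by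
        rw [abs_mul, abs_mul, abs_of_nonneg (sub_nonneg.2 hα1), abs_of_nonneg hαγ]
    _ ≤ (1 - α) * m + (α * γ) * m := by gcongr
    _ = (1 - α * (1 - γ)) * m := by ring

end tdUpdate

theorem exists_pow_mul_lt {ρ ε : ℝ} (hρ0 : 0 ≤ ρ) (hρ1 : ρ < 1) (M : ℝ) (hε : 0 < ε) :
    ∃ n : ℕ, ρ ^ n * M < ε := by
  have h := (tendsto_pow_atTop_nhds_zero_of_lt_one hρ0 hρ1).mul_const M
  rw [zero_mul] at h
  exact (h.eventually (gt_mem_nhds hε)).exists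

theorem exists_contraction_pow_mul_lt {α γ ε : ℝ} (hα0 : 0 < α) (hα1 : α ≤ 1) (hγ0 : 0 ≤ γ)
    (hγ1 : γ < 1) (M : ℝ) (hε : 0 < ε) : ∃ n : ℕ, (1 - α * (1 - γ)) ^ n * M < ε :=
  exists_pow_mul_lt (by nlinarith) (by nlinarith) M hε

structure IsGreedyRun (r : Act → Act → ℝ) (α γ : ℝ) (Q : ℕ → State → Act → ℝ)
    (s : ℕ → State) (a : ℕ → Act) : Prop where
  act_eq : ∀ t, a t = greedy (Q t) (s t)
  state_succ : ∀ t, s (t + 1) = (a t, a t)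
  update : ∀ t, Q (t + 1) (s t) (a t) =
    Q t (s t) (a t) + α * (r (a t) (a t)
      + γ * max (Q t (s (t + 1)) C) (Q t (s (t + 1)) D) - Q t (s t) (a t))
  frame : ∀ t p b, ¬(p = s t ∧ b = a t) → Q (t + 1) p b = Q t p b

/-- At time `t` the run is in state `p`, and `x, d` (resp. `c, y`) are the Q-values of `C, D`
in `(D,D)` (resp. `(C,C)`). -/
def DiagAt (Q : ℕ → State → Act → ℝ) (s : ℕ → State) (t : ℕ) (p : State) (x d c y : ℝ) :
    Prop :=
  s t = p ∧ Q t (D, D) C = x ∧ Q t (D, D) D = d ∧ Q t (C, C) C = c ∧ Q t (C, C) D = y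

namespace IsGreedyRun

variable {r : Act → Act → ℝ} {α γ : ℝ} {Q : ℕ → State → Act → ℝ} {s : ℕ → State}
  {a : ℕ → Act}

theorem state_fst_eq_snd (hQ : IsGreedyRun r α γ Q s a) (h0 : s 0 = (D, D)) :
    ∀ t, (s t).1 = (s t).2
  | 0 => by rw [h0]
  | t + 1 => by rw [hQ.state_succ]

theorem apply_eq_apply_zero_of_fst_ne_snd (hQ : IsGreedyRun r α γ Q s a) (h0 : s 0 = (D, D))
    {p : State} (hp : p.1 ≠ p.2) (b : Act) : ∀ t, Q t p b = Q 0 p b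
  | 0 => rfl
  | t + 1 => by
    rw [hQ.frame t p b fun h => hp (h.1 ▸ hQ.state_fst_eq_snd h0 t),
      hQ.apply_eq_apply_zero_of_fst_ne_snd h0 hp b t]

theorem step (hQ : IsGreedyRun r α γ Q s a) {t : ℕ} {p : State} {b : Act} (hp : s t = p)
    (hb : greedy (Q t) p = b) :
    s (t + 1) = (b, b) ∧
      Q (t + 1) p b = tdUpdate α γ (Q t p b) (r b b) (max (Q t (b, b) C) (Q t (b, b) D)) ∧
      ∀ p' b', ¬(p' = p ∧ b' = b) → Q (t + 1) p' b' = Q t p' b' := by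
  have hat : a t = b := by rw [hQ.act_eq, hp, hb]
  have hs : s (t + 1) = (b, b) := by rw [hQ.state_succ, hat]
  refine ⟨hs, ?_, fun p' b' h => hQ.frame t p' b' (by rwa [hp, hat])⟩
  have h := hQ.update t
  rwa [hp, hat, hs] at h

variable {t : ℕ} {x d c y : ℝ}

theorem diagAt_succ_defect_DD (hQ : IsGreedyRun r α γ Q s a) (h : DiagAt Q s t (D, D) x d c y)
    (hxd : x ≤ d) : DiagAt Q s (t + 1) (D, D) x (tdUpdate α γ d (r D D) d) c y := by
  obtain ⟨hp, hx, hd, hc, hy⟩ := h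
  obtain ⟨hs, hupd, hfr⟩ := hQ.step hp (greedy_of_le (by rwa [hx, hd]))
  rw [hx, hd, max_eq_right hxd] at hupd
  exact ⟨hs, (hfr _ _ (by decide)).trans hx, hupd, (hfr _ _ (by decide)).trans hc,
    (hfr _ _ (by decide)).trans hy⟩

theorem diagAt_succ_coop_DD (hQ : IsGreedyRun r α γ Q s a) (h : DiagAt Q s t (D, D) x d c y)
    (hdx : d < x) : DiagAt Q s (t + 1) (C, C) (tdUpdate α γ x (r C C) (max c y)) d c y := by
  obtain ⟨hp, hx, hd, hc, hy⟩ := h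
  obtain ⟨hs, hupd, hfr⟩ := hQ.step hp (greedy_of_lt (by rwa [hx, hd]))
  rw [hx, hc, hy] at hupd
  exact ⟨hs, hupd, (hfr _ _ (by decide)).trans hd, (hfr _ _ (by decide)).trans hc,
    (hfr _ _ (by decide)).trans hy⟩

theorem diagAt_succ_defect_CC (hQ : IsGreedyRun r α γ Q s a) (h : DiagAt Q s t (C, C) x d c y)
    (hcy : c ≤ y) : DiagAt Q s (t + 1) (D, D) x d c (tdUpdate α γ y (r D D) (max x d)) := by
  obtain ⟨hp, hx, hd, hc, hy⟩ := h
  obtain ⟨hs, hupd, hfr⟩ := hQ.step hp (greedy_of_le (by rwa [hc, hy]))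
  rw [hx, hd, hy] at hupd
  exact ⟨hs, (hfr _ _ (by decide)).trans hx, (hfr _ _ (by decide)).trans hd,
    (hfr _ _ (by decide)).trans hc, hupd⟩

theorem diagAt_succ_coop_CC (hQ : IsGreedyRun r α γ Q s a) (h : DiagAt Q s t (C, C) x d c y)
    (hyc : y < c) : DiagAt Q s (t + 1) (C, C) x d (tdUpdate α γ c (r C C) c) y := by
  obtain ⟨hp, hx, hd, hc, hy⟩ := h
  obtain ⟨hs, hupd, hfr⟩ := hQ.step hp (greedy_of_lt (by rwa [hc, hy]))
  rw [hc, hy, max_eq_left hyc.le] at hupd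
  exact ⟨hs, (hfr _ _ (by decide)).trans hx, (hfr _ _ (by decide)).trans hd, hupd,
    (hfr _ _ (by decide)).trans hy⟩

theorem exists_diagAt_defect_lt (hQ : IsGreedyRun r α γ Q s a)
    (h : DiagAt Q s t (D, D) x d c y) (hα0 : 0 < α) (hα1 : α ≤ 1) (hγ0 : 0 ≤ γ) (hγ1 : γ < 1)
    (hLx : r D D / (1 - γ) < x) : ∃ n d', DiagAt Q s (t + n) (D, D) x d' c y ∧ d' < x := by
  set L := r D D / (1 - γ)
  set ρ := 1 - α * (1 - γ)
  have hL : (1 - γ) * L = r D D := mul_div_cancel₀ _ (by linarith)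
  by_contra! hstay
  have hloop : ∀ n, DiagAt Q s (t + n) (D, D) x (L + ρ ^ n * (d - L)) c y := by
    intro n
    induction n with
    | zero => simpa using h
    | succ n ih =>
      have hd : L + ρ ^ (n + 1) * (d - L) = tdUpdate α γ (L + ρ ^ n * (d - L)) (r D D)
          (L + ρ ^ n * (d - L)) := by
        rw [eq_add_of_sub_eq' (tdUpdate_self_sub hL)]
        ring
      rw [← add_assoc, hd]
      exact hQ.diagAt_succ_defect_DD ih (hstay n _ ih)
  obtain ⟨n, hn⟩ := exists_contraction_pow_mul_lt hα0 hα1 hγ0 hγ1 (d - L) (sub_pos.2 hLx)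
  linarith [hstay n _ (hloop n)]

theorem diagAt_add_two_of_cycle (hQ : IsGreedyRun r α γ Q s a)
    (h : DiagAt Q s t (D, D) x d c y) (hdx : d < x) (hcy : c ≤ y)
    (hdx' : d < tdUpdate α γ x (r C C) y) :
    DiagAt Q s (t + 2) (D, D) (tdUpdate α γ x (r C C) y) d c
      (tdUpdate α γ y (r D D) (tdUpdate α γ x (r C C) y)) := by
  have h₁ := hQ.diagAt_succ_coop_DD h hdx
  rw [max_eq_right hcy] at h₁
  have h₂ := hQ.diagAt_succ_defect_CC h₁ hcy
  rwa [max_eq_left hdx'.le] at h₂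

theorem exists_diagAt_cycle_exit (hQ : IsGreedyRun r α γ Q s a)
    (h : DiagAt Q s t (D, D) x d c y) (hdx : d < x)
    (hα0 : 0 < α) (hα1 : α < 1) (hγ0 : 0 ≤ γ) (hγ1 : γ < 1) {xs ys : ℝ}
    (hxs : xs = r C C + γ * ys) (hys : ys = r D D + γ * xs) (hdxs : d ≤ xs) (hysc : ys < c) :
    ∃ n x' y', DiagAt Q s (t + n) (D, D) x' d c y' ∧ d < x' ∧ y' < c := by
  set ρ := 1 - α * (1 - γ)
  set m := max |x - xs| |y - ys|
  by_contra! hcycle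
  have hloop : ∀ k, ∃ x' y', DiagAt Q s (t + 2 * k) (D, D) x' d c y' ∧ d < x' ∧
      |x' - xs| ≤ ρ ^ k * m ∧ |y' - ys| ≤ ρ ^ k * m := by
    intro k
    induction k with
    | zero => exact ⟨x, y, h, hdx, by simp [m], by simp [m]⟩
    | succ k ih =>
      obtain ⟨x', y', hk, hdx', hx', hy'⟩ := ih
      have hcy' := hcycle _ _ _ hk hdx'
      have hdx'' : d < tdUpdate α γ x' (r C C) y' :=
        lt_tdUpdate hα0.le hα1 hdx' (by nlinarith)
      have hx'' := abs_tdUpdate_sub_le hα0.le hα1.le hγ0 hxs hx' hy'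
      have hy'' := abs_tdUpdate_sub_le hα0.le hα1.le hγ0 hys hy'
        (hx''.trans (mul_le_of_le_one_left ((abs_nonneg _).trans hx') (by nlinarith)))
      rw [← mul_assoc, ← pow_succ'] at hx'' hy''
      exact ⟨_, _, hQ.diagAt_add_two_of_cycle hk hdx' hcy' hdx'', hdx'', hx'', hy''⟩
  obtain ⟨k, hk⟩ := exists_contraction_pow_mul_lt hα0 hα1.le hγ0 hγ1 m (sub_pos.2 hysc)
  obtain ⟨x', y', hk', hdx', -, hy'⟩ := hloop k
  linarith [hcycle _ _ _ hk' hdx', (abs_le.1 hy').2]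

theorem diagAt_coop_CC_forever (hQ : IsGreedyRun r α γ Q s a)
    (h : DiagAt Q s t (C, C) x d c y) (hyc : y < c)
    (hα0 : 0 ≤ α) (hα1 : α ≤ 1) (hγ0 : 0 ≤ γ) (hγ1 : γ < 1) (hcV : c ≤ r C C / (1 - γ)) :
    ∀ n, ∃ c', c ≤ c' ∧ c' ≤ r C C / (1 - γ) ∧ DiagAt Q s (t + n) (C, C) x d c' y := by
  set V := r C C / (1 - γ)
  have hV : (1 - γ) * V = r C C := mul_div_cancel₀ _ (by linarith)
  intro n
  induction n with
  | zero => exact ⟨c, le_rfl, hcV, h⟩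
  | succ n ih =>
    obtain ⟨c', hcc', hc'V, hn⟩ := ih
    have hclosed := tdUpdate_self_sub (α := α) (q := c') hV
    have hρ0 : 0 ≤ 1 - α * (1 - γ) := by nlinarith
    have hρ1 : 1 - α * (1 - γ) ≤ 1 := by nlinarith
    refine ⟨_, ?_, ?_, hQ.diagAt_succ_coop_CC hn (hyc.trans_le hcc')⟩
    · nlinarith [mul_nonneg (sub_nonneg.2 hρ1) (sub_nonneg.2 hc'V)]
    · nlinarith [mul_nonneg hρ0 (sub_nonneg.2 hc'V)]

end IsGreedyRun

theorem greedy_qlearning_reaches_pavlov_general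
    (rCC rDD : ℝ)
    (h2 : rCC > rDD)
    (r : Act → Act → ℝ)
    (hrCC : r C C = rCC)
    (hrDD : r D D = rDD)
    (α γ : ℝ) (hα0 : 0 < α) (hα1 : α < 1) (hγ0 : 0 < γ) (hγ1 : γ < 1)
    (Qt : ℕ → State → Act → ℝ) (s : ℕ → State) (a : ℕ → Act)
    (hs0 : s 0 = (D, D))
    (ha : ∀ t, a t = greedy (Qt t) (s t))
    (hs : ∀ t, s (t + 1) = (a t, a t))
    (hupd : ∀ t, Qt (t + 1) (s t) (a t) =
      Qt t (s t) (a t) + α * (r (a t) (a t)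
        + γ * max (Qt t (s (t + 1)) C) (Qt t (s (t + 1)) D) - Qt t (s t) (a t)))
    (hsame : ∀ t p b, ¬(p = s t ∧ b = a t) → Qt (t + 1) p b = Qt t p b)
    (hAD : ∀ p : State, Qt 0 p D > Qt 0 p C)
    (hi : rDD / (1 - γ) < Qt 0 (D, D) C)
    (hiiA : Qt 0 (D, D) C < (γ * rCC + rDD) / (1 - γ ^ 2))
    (hiiB : (γ * rCC + rDD) / (1 - γ ^ 2) < Qt 0 (C, C) C)
    (hiii : Qt 0 (C, C) C < rCC / (1 - γ)) :
    ∃ t₂ : ℕ, ∀ t ≥ t₂,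
      Qt t (C, C) C > Qt t (C, C) D ∧ Qt t (D, D) C > Qt t (D, D) D ∧
      Qt t (C, D) D > Qt t (C, D) C ∧ Qt t (D, C) D > Qt t (D, C) C := by
  have hQ : IsGreedyRun r α γ Qt s a := ⟨ha, hs, hupd, hsame⟩
  subst hrCC hrDD
  set ys := (γ * r C C + r D D) / (1 - γ ^ 2)
  set xs := r C C + γ * ys
  have hγ2 : 1 - γ ^ 2 ≠ 0 := by nlinarith
  have hys : ys = r D D + γ * xs := by
    simp only [xs, ys]
    field_simp
    ring
  have hyx : ys < xs := by nlinarith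
  obtain ⟨n₁, d, h₁, hdx₀⟩ :=
    hQ.exists_diagAt_defect_lt ⟨hs0, rfl, rfl, rfl, rfl⟩ hα0 hα1.le hγ0.le hγ1 hi
  rw [zero_add] at h₁
  obtain ⟨n₂, x, y, h₂, hdx, hyc⟩ :=
    hQ.exists_diagAt_cycle_exit h₁ hdx₀ hα0 hα1 hγ0.le hγ1 rfl hys (by linarith) hiiB
  have h₃ := hQ.diagAt_succ_coop_DD h₂ hdx
  rw [max_eq_left hyc.le] at h₃
  have hdx' : d < tdUpdate α γ x (r C C) (Qt 0 (C, C) C) :=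
    lt_tdUpdate hα0.le hα1 hdx (by nlinarith)
  refine ⟨n₁ + n₂ + 1, fun t ht => ?_⟩
  obtain ⟨n, rfl⟩ := Nat.exists_eq_add_of_le ht
  obtain ⟨c, hc₀, -, -, hx, hd, hc, hy⟩ :=
    hQ.diagAt_coop_CC_forever h₃ hyc hα0.le hα1.le hγ0.le hγ1 hiii.le n
  refine ⟨by rw [hc, hy]; linarith, by rwa [hx, hd], ?_, ?_⟩
  · simp only [hQ.apply_eq_apply_zero_of_fst_ne_snd hs0 (p := (C, D)) (by decide)]
    exact hAD _
  · simp only [hQ.apply_eq_apply_zero_of_fst_ne_snd hs0 (p := (D, C)) (by decide)]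
    exact hAD _

/-- the deterministic self-play greedy Q-learning trajectory started
from an optimistically initialized always-defect Q-table eventually has the Pavlov
greedy policy forever. -/
theorem greedy_qlearning_reaches_pavlov
    (rCC rCD rDC rDD : ℝ)
    (h1 : rDC > rCC) (h2 : rCC > rDD) (h3 : rDD > rCD)
    (r : Act → Act → ℝ)
    (hrCC : r C C = rCC) (hrCD : r C D = rCD)
    (hrDC : r D C = rDC) (hrDD : r D D = rDD)
    (α γ : ℝ) (hα0 : 0 < α) (hα1 : α < 1) (hγ0 : 0 < γ) (hγ1 : γ < 1)
    (Qt : ℕ → State → Act → ℝ) (s : ℕ → State) (a : ℕ → Act)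
    (hs0 : s 0 = (D, D))
    (ha : ∀ t, a t = greedy (Qt t) (s t))
    (hs : ∀ t, s (t + 1) = (a t, a t))
    (hupd : ∀ t, Qt (t + 1) (s t) (a t) =
      Qt t (s t) (a t) + α * (r (a t) (a t)
        + γ * max (Qt t (s (t + 1)) C) (Qt t (s (t + 1)) D) - Qt t (s t) (a t)))
    (hsame : ∀ t p b, ¬(p = s t ∧ b = a t) → Qt (t + 1) p b = Qt t p b)
    (hAD : ∀ p : State, Qt 0 p D > Qt 0 p C)
    (hi : rDD / (1 - γ) < Qt 0 (D, D) C)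
    (hiiA : Qt 0 (D, D) C < (γ * rCC + rDD) / (1 - γ ^ 2))
    (hiiB : (γ * rCC + rDD) / (1 - γ ^ 2) < Qt 0 (C, C) C)
    (hiiC : Qt 0 (D, D) D < Qt 0 (C, C) C)
    (hiii : Qt 0 (C, C) C < rCC / (1 - γ)) :
    ∃ t₂ : ℕ, ∀ t ≥ t₂,
      Qt t (C, C) C > Qt t (C, C) D ∧ Qt t (D, D) C > Qt t (D, D) D ∧
      Qt t (C, D) D > Qt t (C, D) C ∧ Qt t (D, C) D > Qt t (D, C) C :=
  greedy_qlearning_reaches_pavlov_general rCC rDD h2 r hrCC hrDD α γ hα0 hα1 hγ0 hγ1 Qt s a hs0 ha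
    hs hupd hsame hAD hi hiiA hiiB hiii
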